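/- Fix a real number λ ≠ 0. For all integers n, l with n ≥ l ≥ 0, the degenerate Stirling number of the first kind satisfies S_{1,λ}(n,l) = Σ_{k=l}^{n} S^{(1)}_{J,λ}(n,k) S_{2,λ}(k,l). -/

import Mathlib

open Finset

/-- The degenerate falling factorial `(x)_{n,λ} = x(x−λ)⋯(x−(n−1)λ)`;
for `lam = 1` it is the ordinary falling factorial `(x)_n`. -/
noncomputable def dff (lam : ℝ) (n : ℕ) (x : ℝ) : ℝ :=
  ∏ i ∈ Finset.range n, (x - i * lam)

/-- The degenerate exponential `e_λ^x(t) = Σ_{n≥0} (x)_{n,λ} t^n/n!`. -/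
noncomputable def degExp (lam x : ℝ) : PowerSeries ℝ :=
  PowerSeries.mk fun n => dff lam n x / n.factorial

/-- The degenerate logarithm `log_λ(1+t) = Σ_{n≥1} λ^{n−1}(1)_{n,1/λ} t^n/n!`. -/
noncomputable def degLog (lam : ℝ) : PowerSeries ℝ :=
  PowerSeries.mk fun n =>
    if n = 0 then 0 else lam ^ (n - 1) * dff (1 / lam) n 1 / n.factorial

/-- Composition `f(g(t))` of formal power series (valid definition of composition
when `g` has zero constant term, as in all uses below). -/
noncomputable def pscomp (f g : PowerSeries ℝ) : PowerSeries ℝ :=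
  PowerSeries.mk fun n =>
    ∑ k ∈ Finset.range (n + 1), (PowerSeries.coeff k f) * (PowerSeries.coeff n (g ^ k))


/-!
Both `S_{1,λ}` and `S^{(1)}_{J,λ}` are exponential Riordan arrays: `log_λ(1 + t)^k / k!`
generates `S_{1,λ}(·, k)`, because substituting `log_λ(1 + t)` into `e_λ^{mλ}(t) = (1 + λt)^m`
gives `(1 + t)^{mλ}` and a combination of degenerate falling factorials is determined by its
values at the nodes `mλ`. Composition of series multiplies such arrays as lower triangular
matrices, so `S^{(1)}_{J,λ} = S_{1,λ} S_{1,λ}`, while `S_{1,λ} S_{2,λ} = 1` because the two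
families are the two change-of-basis matrices between `(x)_n` and `(x)_{n,λ}`. Hence
`S^{(1)}_{J,λ} S_{2,λ} = S_{1,λ} (S_{1,λ} S_{2,λ}) = S_{1,λ}`.
-/

open Finset PowerSeries

section FallingFactorial

lemma dff_one_eq_smeval (n : ℕ) (x : ℝ) : dff 1 n x = (descPochhammer ℤ n).smeval x := by
  rw [← Polynomial.aeval_eq_smeval, ← Polynomial.eval_map_algebraMap, descPochhammer_map,
    descPochhammer_eval_eq_prod_range, dff]
  simp

lemma dff_mul_mul (μ x c : ℝ) (n : ℕ) : dff (μ * c) n (x * c) = c ^ n * dff μ n x := by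
  have h : ∀ i : ℕ, x * c - i * (μ * c) = c * (x - i * μ) := fun i => by ring
  simp only [dff, h, prod_mul_distrib, prod_const, card_range]

lemma dff_natCast_mul_eq_zero (μ : ℝ) {m l : ℕ} (h : m < l) : dff μ l (m * μ) = 0 :=
  prod_eq_zero (mem_range.2 h) (sub_self _)

lemma dff_natCast_mul_self_ne_zero {μ : ℝ} (hμ : μ ≠ 0) (m : ℕ) : dff μ m (m * μ) ≠ 0 :=
  prod_ne_zero_iff.2 fun i hi => by
    rw [← sub_mul]
    exact mul_ne_zero (sub_ne_zero.2 (by exact_mod_cast (mem_range.1 hi).ne')) hμ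

/-- The matrix `(dff μ l (m * μ))_{m,l}` is lower triangular with nonzero diagonal. -/
lemma eq_of_sum_mul_dff_natCast_mul_eq {μ : ℝ} (hμ : μ ≠ 0) {N : ℕ} {a b : ℕ → ℝ}
    (h : ∀ m : ℕ, ∑ l ∈ range N, a l * dff μ l (m * μ) = ∑ l ∈ range N, b l * dff μ l (m * μ)) :
    ∀ l < N, a l = b l := by
  intro l
  induction l using Nat.strong_induction_on with
  | _ l ih =>
    intro hl
    have hm := h l
    rw [← sub_eq_zero, ← sum_sub_distrib,
      sum_eq_single l (fun j _ hjl => ?_) (fun h => absurd (mem_range.2 hl) h), ← sub_mul] at hm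
    · exact sub_eq_zero.1 ((mul_eq_zero.1 hm).resolve_right (dff_natCast_mul_self_ne_zero hμ l))
    · rcases hjl.lt_or_gt with hjl | hjl
      · rw [ih j hjl (hjl.trans hl), sub_self]
      · rw [dff_natCast_mul_eq_zero μ hjl, mul_zero, mul_zero, sub_self]

end FallingFactorial

section TriangularProduct

variable {R : Type*} [CommSemiring R]

def triMul (A B : ℕ → ℕ → R) (n l : ℕ) : R :=
  ∑ k ∈ Icc l n, A n k * B k l

lemma triMul_congr {A A' B B' : ℕ → ℕ → R} {n l : ℕ} (hA : ∀ k ∈ Icc l n, A n k = A' n k)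
    (hB : ∀ k ∈ Icc l n, B k l = B' k l) : triMul A B n l = triMul A' B' n l :=
  sum_congr rfl fun k hk => by rw [hA k hk, hB k hk]

lemma triMul_assoc (A B C : ℕ → ℕ → R) (n l : ℕ) :
    triMul (triMul A B) C n l = triMul A (triMul B C) n l := by
  simp only [triMul, sum_mul, mul_sum, mul_assoc]
  exact sum_comm' fun k m => by simp only [mem_Icc]; omega

lemma triMul_ite_eq (A : ℕ → ℕ → R) {n l : ℕ} (hl : l ≤ n) :
    triMul A (fun k l => if k = l then 1 else 0) n l = A n l := by
  simp [triMul, hl]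

lemma sum_mul_sum_eq_sum_triMul_mul (A B : ℕ → ℕ → R) (h : ℕ → R) (n : ℕ) :
    ∑ l ∈ range (n + 1), A n l * ∑ k ∈ range (l + 1), B l k * h k =
      ∑ k ∈ range (n + 1), triMul A B n k * h k := by
  simp only [triMul, mul_sum, sum_mul, mul_assoc]
  exact sum_comm' fun l k => by simp only [mem_range, mem_Icc]; omega

end TriangularProduct

lemma triMul_eq_ite_of_expansions {μ : ℝ} (hμ : μ ≠ 0) {q : ℕ → ℝ → ℝ} {A B : ℕ → ℕ → ℝ}
    (hA : ∀ n x, dff μ n x = ∑ l ∈ range (n + 1), A n l * q l x)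
    (hB : ∀ n x, q n x = ∑ k ∈ range (n + 1), B n k * dff μ k x) {n l : ℕ} (hl : l ≤ n) :
    triMul A B n l = if n = l then 1 else 0 := by
  refine eq_of_sum_mul_dff_natCast_mul_eq hμ (N := n + 1) (a := triMul A B n)
    (b := fun l => if n = l then 1 else 0) (fun m => ?_) l (by omega)
  rw [← sum_mul_sum_eq_sum_triMul_mul]
  simp_rw [← hB, ← hA]
  simp

section Composition

lemma coeff_pow_eq_zero_of_lt {R : Type*} [CommSemiring R] {g : PowerSeries R}
    (hg : constantCoeff g = 0) {n k : ℕ} (h : n < k) : coeff n (g ^ k) = 0 :=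
  coeff_of_lt_order n ((Nat.cast_lt.2 h).trans_le (le_order_pow_of_constantCoeff_eq_zero k hg))

lemma pscomp_eq_subst {f g : PowerSeries ℝ} (hg : constantCoeff g = 0) :
    pscomp f g = f.subst g := by
  ext n
  rw [coeff_subst' (HasSubst.of_constantCoeff_zero' hg), pscomp, coeff_mk,
    finsum_eq_sum_of_support_subset (s := range (n + 1))]
  · simp only [smul_eq_mul]
  · intro d hd
    by_contra h
    simp only [coe_range, Set.mem_Iio, not_lt] at h
    simp [coeff_pow_eq_zero_of_lt hg (Nat.lt_of_succ_le h)] at hd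

lemma pscomp_pow {f g : PowerSeries ℝ} (hg : constantCoeff g = 0) (k : ℕ) :
    pscomp f g ^ k = pscomp (f ^ k) g := by
  rw [pscomp_eq_subst hg, pscomp_eq_subst hg, subst_pow (HasSubst.of_constantCoeff_zero' hg)]

end Composition

section ExpRiordanArray

/-- `A` is the exponential Riordan array `(1, f)`; its entries above the diagonal are
unconstrained. -/
def IsExpRiordanArray (f : PowerSeries ℝ) (A : ℕ → ℕ → ℝ) : Prop :=
  ∀ k : ℕ, C ((k.factorial : ℝ))⁻¹ * f ^ k = mk fun n => if k ≤ n then A n k / n.factorial else 0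

variable {f g : PowerSeries ℝ} {A B : ℕ → ℕ → ℝ}

namespace IsExpRiordanArray

lemma coeff_pow (hf : IsExpRiordanArray f A) (k n : ℕ) :
    coeff n (f ^ k) = k.factorial * if k ≤ n then A n k / n.factorial else 0 := by
  have h := congrArg (coeff n) (hf k)
  rwa [coeff_C_mul, coeff_mk, inv_mul_eq_iff_eq_mul₀ (by positivity)] at h

lemma constantCoeff_eq_zero (hf : IsExpRiordanArray f A) : constantCoeff f = 0 := by
  simpa using hf.coeff_pow 1 0

lemma unique (hA : IsExpRiordanArray f A) (hB : IsExpRiordanArray f B) {n k : ℕ} (hk : k ≤ n) :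
    A n k = B n k := by
  have h := congrArg (coeff n) ((hA k).symm.trans (hB k))
  rwa [coeff_mk, coeff_mk, if_pos hk, if_pos hk, div_left_inj' (by positivity)] at h

/-- `(f ∘ g)^k / k! = (f^k / k!) ∘ g`: the arrays multiply as lower triangular matrices. -/
lemma pscomp (hf : IsExpRiordanArray f A) (hg : IsExpRiordanArray g B) :
    IsExpRiordanArray (pscomp f g) (triMul B A) := by
  intro k
  ext n
  have hg0 := hg.constantCoeff_eq_zero
  rw [coeff_C_mul, coeff_mk, pscomp_pow hg0, _root_.pscomp, coeff_mk]
  split_ifs with hk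
  · rw [← sum_subset (s₁ := Icc k n) (fun m hm => by simp at hm ⊢; omega) fun m hmn hm => by
      rw [hf.coeff_pow, if_neg (by simp at hmn hm ⊢; omega), mul_zero, zero_mul]]
    have hterm : ∀ m ∈ Icc k n, coeff m (f ^ k) * coeff n (g ^ m) =
        k.factorial / n.factorial * (B n m * A m k) := fun m hm => by
      obtain ⟨hkm, hmn⟩ := mem_Icc.1 hm
      rw [hf.coeff_pow, hg.coeff_pow, if_pos hkm, if_pos hmn]
      field_simp
    rw [sum_congr rfl hterm, ← mul_sum, triMul]
    field_simp
  · refine (mul_eq_zero_of_right _ (sum_eq_zero fun m hm => ?_))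
    rw [coeff_pow_eq_zero_of_lt hf.constantCoeff_eq_zero (by simp at hm; omega), zero_mul]

end IsExpRiordanArray

end ExpRiordanArray

section DegenerateSeries

lemma coeff_degExp (μ x : ℝ) (n : ℕ) : coeff n (degExp μ x) = dff μ n x / n.factorial :=
  coeff_mk _ _

lemma degExp_one_eq_binomialSeries (x : ℝ) : degExp 1 x = PowerSeries.binomialSeries ℝ x := by
  ext n
  rw [coeff_degExp, binomialSeries_coeff, smul_eq_mul, mul_one, dff_one_eq_smeval,
    Ring.descPochhammer_eq_factorial_smul_choose, nsmul_eq_mul]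
  field_simp

lemma degExp_one_natCast_mul (m : ℕ) (x : ℝ) : degExp 1 (m * x) = degExp 1 x ^ m := by
  simp only [degExp_one_eq_binomialSeries]
  induction m with
  | zero => simp
  | succ m ih => rw [Nat.cast_succ, add_one_mul, binomialSeries_add, ih, pow_succ]

lemma degExp_mul_mul (μ x c : ℝ) : degExp (μ * c) (x * c) = rescale c (degExp μ x) := by
  ext n
  rw [coeff_rescale, coeff_degExp, coeff_degExp, dff_mul_mul, mul_div_assoc]

lemma degExp_natCast_mul (μ : ℝ) (m : ℕ) : degExp μ (m * μ) = (1 + C μ * X) ^ m := by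
  have h := degExp_mul_mul 1 m μ
  rw [one_mul] at h
  rw [h, degExp_one_eq_binomialSeries, binomialSeries_nat, map_pow, map_add, map_one, rescale_X]

lemma constantCoeff_degLog (μ : ℝ) : constantCoeff (degLog μ) = 0 := by
  rw [← coeff_zero_eq_constantCoeff_apply, degLog, coeff_mk, if_pos rfl]

lemma one_add_C_mul_degLog {μ : ℝ} (hμ : μ ≠ 0) : 1 + C μ * degLog μ = degExp 1 μ := by
  ext n
  rw [map_add, coeff_C_mul, coeff_degExp, degLog, coeff_mk]
  rcases n with _ | n
  · simp [dff]
  · have h := dff_mul_mul (1 / μ) 1 μ (n + 1)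
    rw [one_div_mul_cancel hμ, one_mul] at h
    rw [coeff_one, if_neg n.succ_ne_zero, if_neg n.succ_ne_zero, zero_add, h, pow_succ,
      Nat.add_sub_cancel]
    ring

/-- Substituting `log_λ(1 + t)` turns `e_λ^{mλ}(t) = (1 + λt)^m` into `(1 + t)^{mλ}`. -/
lemma pscomp_degExp_natCast_mul_degLog {μ : ℝ} (hμ : μ ≠ 0) (m : ℕ) :
    pscomp (degExp μ (m * μ)) (degLog μ) = degExp 1 (m * μ) := by
  have hL := HasSubst.of_constantCoeff_zero' (constantCoeff_degLog μ)
  rw [pscomp_eq_subst (constantCoeff_degLog μ), degExp_natCast_mul, ← coe_substAlgHom hL,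
    map_pow, map_add, map_one, map_mul, coe_substAlgHom hL, subst_X hL, subst_C]
  change (1 + C μ * degLog μ) ^ m = _
  rw [one_add_C_mul_degLog hμ, degExp_one_natCast_mul]

end DegenerateSeries

/-- Compare the coefficients of `e_λ^x(log_λ(1 + t)) = (1 + t)^x` at the nodes `x = mλ`. -/
lemma isExpRiordanArray_degLog {lam : ℝ} (hlam : lam ≠ 0) {S1 : ℕ → ℕ → ℝ}
    (hS1 : ∀ (n : ℕ) (x : ℝ), dff 1 n x = ∑ l ∈ range (n + 1), S1 n l * dff lam l x) :
    IsExpRiordanArray (degLog lam) S1 := by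
  intro k
  ext n
  rw [coeff_C_mul, coeff_mk]
  split_ifs with hk
  · rw [inv_mul_eq_div]
    refine eq_of_sum_mul_dff_natCast_mul_eq hlam (N := n + 1)
      (a := fun l => coeff n (degLog lam ^ l) / l.factorial) (b := fun l => S1 n l / n.factorial)
      (fun m => ?_) k (by omega)
    calc ∑ l ∈ range (n + 1), coeff n (degLog lam ^ l) / l.factorial * dff lam l (m * lam)
        = coeff n (pscomp (degExp lam (m * lam)) (degLog lam)) := by
          rw [pscomp, coeff_mk]
          exact sum_congr rfl fun l _ => by rw [coeff_degExp]; ring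
      _ = dff 1 n (m * lam) / n.factorial := by
          rw [pscomp_degExp_natCast_mul_degLog hlam, coeff_degExp]
      _ = ∑ l ∈ range (n + 1), S1 n l / n.factorial * dff lam l (m * lam) := by
          rw [hS1, sum_div]
          exact sum_congr rfl fun l _ => by ring
  · rw [coeff_pow_eq_zero_of_lt (constantCoeff_degLog lam) (by omega), mul_zero]

theorem stirling1_via_jindalrae1 (lam : ℝ) (hlam : lam ≠ 0)
    (S1 S2 SJ1 : ℕ → ℕ → ℝ)
    (hS1 : ∀ (n : ℕ) (x : ℝ), dff 1 n x = ∑ l ∈ Finset.range (n + 1), S1 n l * dff lam l x)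
    (hS2 : ∀ (n : ℕ) (x : ℝ), dff lam n x = ∑ k ∈ Finset.range (n + 1), S2 n k * dff 1 k x)
    (hSJ1 : ∀ k : ℕ, (PowerSeries.C ((k.factorial : ℝ))⁻¹) * (pscomp (degLog lam) (degLog lam)) ^ k = PowerSeries.mk (fun n => if k ≤ n then SJ1 n k / n.factorial else 0))
    : ∀ n l : ℕ, l ≤ n → S1 n l = ∑ k ∈ Finset.Icc l n, SJ1 n k * S2 k l := by
  intro n l hln
  have hL : IsExpRiordanArray (degLog lam) S1 := isExpRiordanArray_degLog hlam hS1
  have hSJ : ∀ k ∈ Icc l n, triMul S1 S1 n k = SJ1 n k := fun k hk =>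
    (hL.pscomp hL).unique hSJ1 (mem_Icc.1 hk).2
  have hOrth : ∀ m ∈ Icc l n, (if m = l then 1 else 0) = triMul S1 S2 m l := fun m hm =>
    (triMul_eq_ite_of_expansions one_ne_zero hS1 hS2 (mem_Icc.1 hm).1).symm
  calc S1 n l = triMul S1 (fun m l => if m = l then 1 else 0) n l := (triMul_ite_eq S1 hln).symm
    _ = triMul S1 (triMul S1 S2) n l := triMul_congr (fun _ _ => rfl) hOrth
    _ = triMul (triMul S1 S1) S2 n l := (triMul_assoc S1 S1 S2 n l).symm
    _ = triMul SJ1 S2 n l := triMul_congr hSJ fun _ _ => rfl
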